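/- Let ν > 0 and let g_ν be the inner product on 𝔤_I whose matrix in the basis e₀, e₁, e₂ is diag(1,1,ν). Then the curvature tensor of the Levi-Civita product of (𝔤_I, g_ν) satisfies R(X,Y)Z = −(1/ν)·(g_ν(Y,Z)·X − g_ν(X,Z)·Y) for all X, Y, Z ∈ 𝔤_I; that is, the corresponding left-invariant metric has constant sectional curvature −1/ν (it is the metric of real hyperbolic 3-space of curvature −1/ν). -/
import Mathlib


noncomputable section

open scoped BigOperators

/-- The underlying space of the 3-dimensional Lie algebras under consideration. -/
abbrev V3 : Type := Fin 3 → ℝ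

/-- The bracket of the Lie algebra `𝔤_I`:
`[e₀,e₁] = 0`, `[e₂,e₀] = e₀`, `[e₂,e₁] = e₁`, extended bilinearly. -/
def braI (x y : V3) : V3 :=
  ![x 2 * y 0 - y 2 * x 0, x 2 * y 1 - y 2 * x 1, 0]

/-- The inner product `g_ν` on `𝔤_I` with matrix `diag(1,1,ν)` in the basis `e₀,e₁,e₂`. -/
def gI (ν : ℝ) (x y : V3) : ℝ := x 0 * y 0 + x 1 * y 1 + ν * (x 2 * y 2)

/-- The curvature tensor `R(X,Y)Z = ∇_X ∇_Y Z − ∇_Y ∇_X Z − ∇_{[X,Y]} Z`. -/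
def Rc (br nab : V3 → V3 → V3) (X Y Z : V3) : V3 :=
  nab X (nab Y Z) - nab Y (nab X Z) - nab (br X Y) Z

/-- for any `ν > 0`, the curvature tensor of the Levi-Civita product
(the unique product satisfying the Koszul formula) of `(𝔤_I, g_ν)` satisfies
`R(X,Y)Z = −(1/ν)(g_ν(Y,Z) X − g_ν(X,Z) Y)`, i.e. the corresponding left-invariant
metric has constant sectional curvature `−1/ν`. -/
theorem stmt0 (ν : ℝ) (hν : 0 < ν) (nab : V3 → V3 → V3)
    (hK : ∀ X Y Z : V3, 2 * gI ν (nab X Y) Z =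
      gI ν (braI X Y) Z - gI ν (braI Y Z) X + gI ν (braI Z X) Y) :
    ∀ X Y Z : V3,
      Rc braI nab X Y Z = -(1/ν) • (gI ν Y Z • X - gI ν X Z • Y) := by
  have hν' : ν ≠ 0 := ne_of_gt hν
  have e0 : ∀ f : V3, f ⟨0, by norm_num⟩ = f 0 := fun _ => rfl
  have e1 : ∀ f : V3, f ⟨1, by norm_num⟩ = f 1 := fun _ => rfl
  have e2 : ∀ f : V3, f ⟨2, by norm_num⟩ = f 2 := fun _ => rfl
  have hnab : ∀ X Y : V3,
      nab X Y = ![-(X 0 * Y 2), -(X 1 * Y 2), (X 0 * Y 0 + X 1 * Y 1) / ν] := by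
    intro X Y
    have h0 := hK X Y ![1, 0, 0]
    have h1 := hK X Y ![0, 1, 0]
    have h2 := hK X Y ![0, 0, 1]
    simp only [gI, braI, Matrix.cons_val_zero, Matrix.cons_val_one, Matrix.head_cons,
      Matrix.cons_val_two, Matrix.tail_cons] at h0 h1 h2
    funext i
    fin_cases i <;>
      simp only [e0, e1, e2, Matrix.cons_val_zero, Matrix.cons_val_one, Matrix.head_cons,
        Matrix.cons_val_two, Matrix.tail_cons] <;>
      [linarith; linarith; (field_simp; linarith)]
  intro X Y Z
  funext i
  have hsub : ∀ (a b : V3) (j : Fin 3), (a - b) j = a j - b j := fun _ _ _ => rfl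
  have hsmul : ∀ (c : ℝ) (a : V3) (j : Fin 3), (c • a) j = c * a j := fun _ _ _ => rfl
  simp only [Rc, hnab, braI, gI, hsub, hsmul, Matrix.cons_val_zero, Matrix.cons_val_one,
    Matrix.head_cons, Matrix.cons_val_two, Matrix.tail_cons, neg_smul]
  fin_cases i <;>
    simp only [e0, e1, e2, hsub, hsmul, Matrix.cons_val_zero, Matrix.cons_val_one,
      Matrix.head_cons, Matrix.cons_val_two, Matrix.tail_cons] <;>
    field_simp <;> ring
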